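/- arXiv:2302.12797 — 5 statements merged into one kernel-verified Lean document; each statement's English description precedes it below -/
import Mathlib

section
/- Let (q_j)_{j∈ℤ} be real numbers with q_m ≤ q_j ≤ q_M for all j, let the kernel weights satisfy γ₀ ≥ γ₁ ≥ … ≥ γ_{N−1} ≥ 0, let V₁ be continuously differentiable and V₂ be differentiable, and assume either (V₁' ≤ 0 and V₂' ≥ 0) or (V₁' ≥ 0 and V₂' ≤ 0) on the relevant ranges. Let L₁ be a bound for |V₁'| on the interval of attainable nonlocal values and L₂ a bound for |V₂'| on [q_m, q_M]. Then with V_j := V₁( Σ_{k=0}^{N−1} γ_k V₂(q_{j+k+1}) ), for every j ∈ ℤ one has V_{j−1} − V_j ≤ L₁ L₂ γ₀ ( q_M − q_j ). -/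
open Finset

/-- Discrete nonlocal velocity `V_j = V₁( Σ_{k=0}^{N-1} γ_k V₂(q_{j+k+1}) )`. -/
noncomputable def discVel (γw : ℕ → ℝ) (N : ℕ) (V₁ V₂ : ℝ → ℝ) (u : ℤ → ℝ) (j : ℤ) : ℝ :=
  V₁ (∑ k ∈ Finset.range N, γw k * V₂ (u (j + (k : ℤ) + 1)))

/-- The interval of attainable nonlocal values
`[ (Σ_k γ_k) · inf_{[q_m,q_M]} V₂ , (Σ_k γ_k) · sup_{[q_m,q_M]} V₂ ]`. -/
noncomputable def attainSet (γw : ℕ → ℝ) (N : ℕ) (V₂ : ℝ → ℝ) (qm qM : ℝ) : Set ℝ :=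
  Set.Icc ((∑ k ∈ Finset.range N, γw k) * sInf (V₂ '' Set.Icc qm qM))
          ((∑ k ∈ Finset.range N, γw k) * sSup (V₂ '' Set.Icc qm qM))

/-!
With `a_k = V₂(q_{j+k})`, the difference of the nonlocal arguments of `V_{j-1}` and `V_j` is
`Σ_k γ_k (a_k - a_{k+1})`. When `V₂` is monotone, `b_k = V₂(q_M) - a_k ≥ 0`, and summation by parts
against the decreasing nonnegative weights bounds `Σ_k γ_k (b_k - b_{k+1})` by `γ₀ b₀`; this is at most
`γ₀ L₂ (q_M - q_j)` by the mean value inequality. So the argument of `V_j` exceeds that of `V_{j-1}` by at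
most this amount, and since `V₁` is antitone only such an increase can raise `V_{j-1} - V_j`, by at most
`L₁` times it. The case of antitone `V₂` and monotone `V₁` is symmetric.
-/

theorem sum_mul_sub_succ_le {γ b : ℕ → ℝ} {N : ℕ} (hN : 0 < N) (hγ_nonneg : ∀ k < N, 0 ≤ γ k)
    (hγ_mono : ∀ k, k + 1 < N → γ (k + 1) ≤ γ k) (hb : ∀ k, 0 ≤ b k) :
    ∑ k ∈ range N, γ k * (b k - b (k + 1)) ≤ γ 0 * b 0 := by
  have telescope : ∀ n < N,
      ∑ k ∈ range (n + 1), γ k * (b k - b (k + 1)) ≤ γ 0 * b 0 - γ n * b (n + 1) := by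
    intro n hn
    induction n with
    | zero => simp only [zero_add, sum_range_one]; linarith
    | succ n ih =>
      rw [sum_range_succ]
      have := mul_le_mul_of_nonneg_right (hγ_mono n hn) (hb (n + 1))
      linarith [ih (by omega)]
  obtain ⟨n, rfl⟩ := Nat.exists_eq_add_one_of_ne_zero hN.ne'
  linarith [telescope n n.lt_add_one, mul_nonneg (hγ_nonneg n n.lt_add_one) (hb (n + 1))]

section OneSidedLipschitz

variable {f : ℝ → ℝ} {s : Set ℝ} {L c x y : ℝ}

theorem AntitoneOn.sub_le_mul_of_abs_deriv_le (hanti : AntitoneOn f s) (hs : Convex ℝ s)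
    (hf : ∀ z ∈ s, DifferentiableAt ℝ f z) (hL : ∀ z ∈ s, |deriv f z| ≤ L)
    (hx : x ∈ s) (hy : y ∈ s) (hc : 0 ≤ c) (hxy : x - y ≤ c) :
    f y - f x ≤ L * c := by
  have hL₀ : 0 ≤ L := (abs_nonneg _).trans (hL x hx)
  rcases le_total x y with hle | hle
  · linarith [hanti hx hy hle, mul_nonneg hL₀ hc]
  · have hmvt : |f y - f x| ≤ L * |y - x| := hs.norm_image_sub_le_of_norm_deriv_le hf hL hx hy
    rw [abs_sub_comm y, abs_of_nonneg (sub_nonneg.2 hle)] at hmvt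
    calc f y - f x ≤ |f y - f x| := le_abs_self _
      _ ≤ L * (x - y) := hmvt
      _ ≤ L * c := mul_le_mul_of_nonneg_left hxy hL₀

theorem MonotoneOn.sub_le_mul_of_abs_deriv_le (hmono : MonotoneOn f s) (hs : Convex ℝ s)
    (hf : ∀ z ∈ s, DifferentiableAt ℝ f z) (hL : ∀ z ∈ s, |deriv f z| ≤ L)
    (hx : x ∈ s) (hy : y ∈ s) (hc : 0 ≤ c) (hxy : y - x ≤ c) :
    f y - f x ≤ L * c := by
  have := hmono.neg.sub_le_mul_of_abs_deriv_le (L := L) hs (fun z hz => (hf z hz).fun_neg)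
    (fun z hz => by rw [deriv.fun_neg, abs_neg]; exact hL z hz) hy hx hc hxy
  linarith

end OneSidedLipschitz

section DerivSign

variable {f : ℝ → ℝ} {a b : ℝ}

theorem monotoneOn_Icc_of_deriv_nonneg (hf : Differentiable ℝ f)
    (hf' : ∀ x ∈ Set.Icc a b, 0 ≤ deriv f x) : MonotoneOn f (Set.Icc a b) :=
  monotoneOn_of_deriv_nonneg (convex_Icc a b) hf.continuous.continuousOn hf.differentiableOn
    fun x hx => hf' x (interior_subset hx)

theorem antitoneOn_Icc_of_deriv_nonpos (hf : Differentiable ℝ f)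
    (hf' : ∀ x ∈ Set.Icc a b, deriv f x ≤ 0) : AntitoneOn f (Set.Icc a b) :=
  antitoneOn_of_deriv_nonpos (convex_Icc a b) hf.continuous.continuousOn hf.differentiableOn
    fun x hx => hf' x (interior_subset hx)

end DerivSign

theorem sum_mem_attainSet {γw : ℕ → ℝ} {N : ℕ} {V₂ : ℝ → ℝ} {qm qM : ℝ}
    (hV₂ : ContinuousOn V₂ (Set.Icc qm qM)) (hγ : ∀ k < N, 0 ≤ γw k) {x : ℕ → ℝ}
    (hx : ∀ k < N, x k ∈ Set.Icc qm qM) :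
    ∑ k ∈ range N, γw k * V₂ (x k) ∈ attainSet γw N V₂ qm qM := by
  have hK := isCompact_Icc.image_of_continuousOn hV₂
  rw [attainSet, sum_mul, sum_mul]
  constructor <;> refine sum_le_sum fun k hk => ?_ <;> rw [mem_range] at hk <;>
    refine mul_le_mul_of_nonneg_left ?_ (hγ k hk)
  · exact csInf_le hK.bddBelow (Set.mem_image_of_mem V₂ (hx k hk))
  · exact le_csSup hK.bddAbove (Set.mem_image_of_mem V₂ (hx k hk))

section ShiftedSums

variable {f : ℝ → ℝ} {s : Set ℝ} {L B : ℝ} {γ a : ℕ → ℝ} {N : ℕ}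

theorem AntitoneOn.sub_sum_shift_le (hanti : AntitoneOn f s) (hs : Convex ℝ s)
    (hf : ∀ z ∈ s, DifferentiableAt ℝ f z) (hL : ∀ z ∈ s, |deriv f z| ≤ L) (hN : 0 < N)
    (hγ_nonneg : ∀ k < N, 0 ≤ γ k) (hγ_mono : ∀ k, k + 1 < N → γ (k + 1) ≤ γ k)
    (ha : ∀ k, a k ≤ B) (hS : ∑ k ∈ range N, γ k * a k ∈ s)
    (hS' : ∑ k ∈ range N, γ k * a (k + 1) ∈ s) :
    f (∑ k ∈ range N, γ k * a k) - f (∑ k ∈ range N, γ k * a (k + 1)) ≤ L * (γ 0 * (B - a 0)) := by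
  have hb : ∀ k, 0 ≤ B - a k := fun k => sub_nonneg.2 (ha k)
  refine hanti.sub_le_mul_of_abs_deriv_le hs hf hL hS' hS (mul_nonneg (hγ_nonneg 0 hN) (hb 0)) ?_
  rw [← sum_sub_distrib]
  convert sum_mul_sub_succ_le hN hγ_nonneg hγ_mono hb using 2
  ring

theorem MonotoneOn.sub_sum_shift_le (hmono : MonotoneOn f s) (hs : Convex ℝ s)
    (hf : ∀ z ∈ s, DifferentiableAt ℝ f z) (hL : ∀ z ∈ s, |deriv f z| ≤ L) (hN : 0 < N)
    (hγ_nonneg : ∀ k < N, 0 ≤ γ k) (hγ_mono : ∀ k, k + 1 < N → γ (k + 1) ≤ γ k)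
    (ha : ∀ k, B ≤ a k) (hS : ∑ k ∈ range N, γ k * a k ∈ s)
    (hS' : ∑ k ∈ range N, γ k * a (k + 1) ∈ s) :
    f (∑ k ∈ range N, γ k * a k) - f (∑ k ∈ range N, γ k * a (k + 1)) ≤ L * (γ 0 * (a 0 - B)) := by
  have hb : ∀ k, 0 ≤ a k - B := fun k => sub_nonneg.2 (ha k)
  refine hmono.sub_le_mul_of_abs_deriv_le hs hf hL hS' hS (mul_nonneg (hγ_nonneg 0 hN) (hb 0)) ?_
  rw [← sum_sub_distrib]
  convert sum_mul_sub_succ_le hN hγ_nonneg hγ_mono hb using 2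
  ring

end ShiftedSums

/-- **Upper bound on the difference of consecutive discrete nonlocal velocities.**
`V_{j-1} - V_j ≤ L₁ L₂ γ₀ (q_M - q_j)` for all `j ∈ ℤ`. -/
theorem discrete_velocity_difference_upper
    (N : ℕ) (hN : 0 < N) (γw : ℕ → ℝ) (V₁ V₂ : ℝ → ℝ)
    (qm qM L₁ L₂ : ℝ) (q : ℤ → ℝ)
    (hV₁ : ContDiff ℝ 1 V₁) (hV₂ : Differentiable ℝ V₂)
    (hγ_nonneg : ∀ k, k < N → 0 ≤ γw k)
    (hγ_mono : ∀ k, k + 1 < N → γw (k + 1) ≤ γw k)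
    (hbd : ∀ j : ℤ, qm ≤ q j ∧ q j ≤ qM)
    (hsign :
      ((∀ x ∈ attainSet γw N V₂ qm qM, deriv V₁ x ≤ 0) ∧
        (∀ x ∈ Set.Icc qm qM, 0 ≤ deriv V₂ x)) ∨
      ((∀ x ∈ attainSet γw N V₂ qm qM, 0 ≤ deriv V₁ x) ∧
        (∀ x ∈ Set.Icc qm qM, deriv V₂ x ≤ 0)))
    (hL₁ : ∀ a ∈ attainSet γw N V₂ qm qM, |deriv V₁ a| ≤ L₁)
    (hL₂ : ∀ a ∈ Set.Icc qm qM, |deriv V₂ a| ≤ L₂) :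
    ∀ j : ℤ, discVel γw N V₁ V₂ q (j - 1) - discVel γw N V₁ V₂ q j
      ≤ L₁ * L₂ * γw 0 * (qM - q j) := by
  intro j
  have hq : ∀ i, q i ∈ Set.Icc qm qM := hbd
  have hqM : qM ∈ Set.Icc qm qM := ⟨(hq 0).1.trans (hq 0).2, le_rfl⟩
  set a : ℕ → ℝ := fun k => V₂ (q (j + k))
  have hvel : discVel γw N V₁ V₂ q (j - 1) - discVel γw N V₁ V₂ q j
      = V₁ (∑ k ∈ range N, γw k * a k) - V₁ (∑ k ∈ range N, γw k * a (k + 1)) := by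
    simp only [discVel, a, sub_add_add_cancel, Nat.cast_add, Nat.cast_one, add_assoc]
  have hS : ∀ i : ℕ, ∑ k ∈ range N, γw k * a (k + i) ∈ attainSet γw N V₂ qm qM := fun i =>
    sum_mem_attainSet hV₂.continuous.continuousOn hγ_nonneg fun k _ => hq _
  have hV₁d : Differentiable ℝ V₁ := hV₁.differentiable one_ne_zero
  have hV₂lip : |V₂ qM - a 0| ≤ L₂ * (qM - q j) := by
    simpa [a, abs_of_nonneg (sub_nonneg.2 (hq j).2)] using
      (convex_Icc qm qM).norm_image_sub_le_of_norm_deriv_le (fun x _ => hV₂ x) hL₂ (hq j) hqM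
  have hscale : ∀ d ≤ L₂ * (qM - q j), L₁ * (γw 0 * d) ≤ L₁ * L₂ * γw 0 * (qM - q j) := by
    intro d hd
    have hL₁₀ : 0 ≤ L₁ := (abs_nonneg _).trans (hL₁ _ (hS 0))
    have hγ₀ : 0 ≤ γw 0 := hγ_nonneg 0 hN
    calc L₁ * (γw 0 * d) ≤ L₁ * (γw 0 * (L₂ * (qM - q j))) := by gcongr
      _ = L₁ * L₂ * γw 0 * (qM - q j) := by ring
  rw [hvel]
  rcases hsign with ⟨hV₁', hV₂'⟩ | ⟨hV₁', hV₂'⟩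
  · exact ((antitoneOn_Icc_of_deriv_nonpos hV₁d hV₁').sub_sum_shift_le (convex_Icc _ _)
      (fun x _ => hV₁d x) hL₁ hN hγ_nonneg hγ_mono
      (fun k => monotoneOn_Icc_of_deriv_nonneg hV₂ hV₂' (hq _) hqM (hq _).2) (hS 0) (hS 1)).trans
      (hscale _ ((le_abs_self _).trans hV₂lip))
  · exact ((monotoneOn_Icc_of_deriv_nonneg hV₁d hV₁').sub_sum_shift_le (convex_Icc _ _)
      (fun x _ => hV₁d x) hL₁ hN hγ_nonneg hγ_mono
      (fun k => antitoneOn_Icc_of_deriv_nonpos hV₂ hV₂' (hq _) hqM (hq _).2) (hS 0) (hS 1)).trans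
      (hscale _ ((le_abs_self _).trans ((abs_sub_comm _ _).trans_le hV₂lip)))
end

section
/- Let q_m, q_M, q_{j−1}, q_j, V_{j−1}, V_j, C, M, λ be real numbers satisfying: 0 ≤ q_m, q_m ≤ q_{j−1} ≤ q_M, q_m ≤ q_j ≤ q_M, 0 ≤ V_{j−1} ≤ M, 0 ≤ V_j ≤ M, C ≥ 0, λ ≥ 0, the velocity-difference bounds C (q_m − q_j) ≤ V_{j−1} − V_j ≤ C (q_M − q_j), and the CFL condition λ ( C q_M + M ) ≤ 1. Then the one-step Godunov-type update q⁺ := q_j − λ ( q_j V_j − q_{j−1} V_{j−1} ) satisfies q_m ≤ q⁺ ≤ q_M. -/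
/-- **Inductive step of the discrete maximum principle** for the Godunov-type update
`q⁺ = q_j − λ (q_j V_j − q_{j−1} V_{j−1})`: under the stated bounds on the data, the
velocity-difference bounds `C (q_m − q_j) ≤ V_{j−1} − V_j ≤ C (q_M − q_j)` and the CFL
condition `λ (C q_M + M) ≤ 1`, one has `q_m ≤ q⁺ ≤ q_M`. -/
theorem godunov_one_step_bounds
    (qm qM qjm qj Vjm Vj C M lam : ℝ)
    (hqm_nonneg : 0 ≤ qm)
    (hqjm : qm ≤ qjm ∧ qjm ≤ qM)
    (hqj : qm ≤ qj ∧ qj ≤ qM)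
    (hVjm : 0 ≤ Vjm ∧ Vjm ≤ M)
    (hVj : 0 ≤ Vj ∧ Vj ≤ M)
    (hC : 0 ≤ C)
    (hlam : 0 ≤ lam)
    (hdiff_lower : C * (qm - qj) ≤ Vjm - Vj)
    (hdiff_upper : Vjm - Vj ≤ C * (qM - qj))
    (hCFL : lam * (C * qM + M) ≤ 1) :
    qm ≤ qj - lam * (qj * Vj - qjm * Vjm) ∧
      qj - lam * (qj * Vj - qjm * Vjm) ≤ qM := by
  obtain ⟨h1, h2⟩ := hqjm
  obtain ⟨h3, h4⟩ := hqj
  obtain ⟨h5, h6⟩ := hVjm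
  obtain ⟨h7, h8⟩ := hVj
  have hqj0 : 0 ≤ qj := le_trans hqm_nonneg h3
  constructor
  · -- q⁺ = qj + λ qj (Vjm - Vj) + λ (qjm - qj) Vjm
    -- ≥ qj + λ (qm - qj) (C qj + Vjm) ≥ qj + (qm - qj) = qm
    have key : qj - lam * (qj * Vj - qjm * Vjm) ≥ qj + (qm - qj) * (lam * (C * qj + Vjm)) := by
      nlinarith [mul_nonneg hlam (mul_nonneg hqj0 hC),
        mul_le_mul_of_nonneg_left hdiff_lower (mul_nonneg hlam hqj0),
        mul_le_mul_of_nonneg_right (mul_le_mul_of_nonneg_left h1 hlam) h5]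
    have h9 : lam * (C * qj + Vjm) ≤ 1 := by nlinarith
    have h10 : 0 ≤ lam * (C * qj + Vjm) := by positivity
    nlinarith [mul_le_mul_of_nonneg_left h9 (sub_nonneg.2 h3)]
  · have key : qj - lam * (qj * Vj - qjm * Vjm) ≤ qj + (qM - qj) * (lam * (C * qj + Vjm)) := by
      nlinarith [mul_le_mul_of_nonneg_left hdiff_upper (mul_nonneg hlam hqj0),
        mul_le_mul_of_nonneg_right (mul_le_mul_of_nonneg_left h2 hlam) h5]
    have h9 : lam * (C * qj + Vjm) ≤ 1 := by nlinarith
    have h10 : 0 ≤ lam * (C * qj + Vjm) := by positivity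
    nlinarith [mul_le_mul_of_nonneg_left h9 (sub_nonneg.2 h4)]
end

section
/- Let γ : [0,∞) → [0,∞) be continuously differentiable, nonincreasing, integrable, with lim_{z→∞} γ(z) = 0, and let g : ℝ → ℝ be bounded and continuous. Define W(x) := ∫_x^∞ γ(y−x) g(y) dy. If g attains a global minimum at x̃ ∈ ℝ (i.e. g(y) ≥ g(x̃) for all y ∈ ℝ), then W is differentiable at x̃ and W'(x̃) ≥ 0. -/
open MeasureTheory Set Filter
open scoped Topology

/-! Substituting `y = x + z`, `W x = ∫_{z>0} γ z g (x+z)`. Integrating by parts against a primitive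
`F` of `g` moves the derivative off the kernel: `W x = ∫_{z>0} γ' z (F x - F (x+z))`, whose
integrand is differentiable in `x` with derivative `γ' z (g x - g (x+z))`, dominated by `2M|γ'|`.
Hence `W' x₀ = ∫_{z>0} γ' z (g x₀ - g (x₀+z))`, and at a minimum of `g` both factors are
nonpositive. The boundary terms and the integrability of `z γ' z` rest on `z γ z → 0`, which
holds for every nonincreasing integrable kernel. -/

section

variable {γ γ' F g : ℝ → ℝ} {M : ℝ}

theorem setIntegral_Ioi_comp_add_left {E : Type*} [NormedAddCommGroup E] [NormedSpace ℝ E]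
    (f : ℝ → E) (a d : ℝ) : ∫ z in Ioi a, f (d + z) = ∫ y in Ioi (d + a), f y := by
  have hpre : (fun z => z + d) ⁻¹' Ioi (d + a) = Ioi a := by
    ext z; simp [add_comm]
  rw [← (measurePreserving_add_right volume d).setIntegral_preimage_emb
    (measurableEmbedding_addRight d) f (Ioi (d + a)), hpre]
  simp only [add_comm]

theorem AntitoneOn.tendsto_id_mul_atTop_nhds_zero (hmono : AntitoneOn γ (Ici 0))
    (hnonneg : ∀ z ∈ Ici (0 : ℝ), 0 ≤ γ z) (hint : IntegrableOn γ (Ioi 0)) :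
    Tendsto (fun z => z * γ z) atTop (𝓝 0) := by
  have htail : Tendsto (fun T : ℝ => 2 * ∫ z in Ioi (T / 2), γ z) atTop (𝓝 0) := by
    simpa using ((tendsto_integral_Ioi_zero (f := γ) (μ := volume)
      (tendsto_id.atTop_div_const two_pos)).const_mul (2 : ℝ))
  -- `T γ T ≤ 2 ∫_{T/2}^T γ` by monotonicity, and tails of an integrable function vanish
  refine squeeze_zero' ?_ ?_ htail
  · filter_upwards [eventually_ge_atTop 0] with T hT using mul_nonneg hT (hnonneg T hT)
  filter_upwards [eventually_ge_atTop 0] with T hT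
  have hT2 : 0 ≤ T / 2 := by linarith
  have hmid : (T - T / 2) * γ T ≤ ∫ z in Ioc (T / 2) T, γ z := by
    rw [← intervalIntegral.integral_of_le (by linarith)]
    simpa [mul_comm] using intervalIntegral.integral_mono_on (by linarith)
      intervalIntegrable_const
      ((intervalIntegrable_iff_integrableOn_Ioc_of_le (by linarith)).2
        (hint.mono_set (Ioc_subset_Ioi_self.trans (Ioi_subset_Ioi hT2))))
      fun z hz => hmono (hT2.trans hz.1) hT hz.2
  have htail_le : ∫ z in Ioc (T / 2) T, γ z ≤ ∫ z in Ioi (T / 2), γ z :=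
    setIntegral_mono_set (hint.mono_set (Ioi_subset_Ioi hT2))
      ((ae_restrict_mem measurableSet_Ioi).mono fun z hz => hnonneg z (hT2.trans hz.le))
      (Eventually.of_forall Ioc_subset_Ioi_self)
  linarith

theorem integrableOn_Ioi_id_mul_deriv (hγ0 : ContinuousWithinAt γ (Ici 0) 0)
    (hγ' : ∀ z ∈ Ioi 0, HasDerivAt γ (γ' z) z) (hγ'_nonpos : ∀ z ∈ Ioi 0, γ' z ≤ 0)
    (hint : IntegrableOn γ (Ioi 0)) (hzγ : Tendsto (fun z => z * γ z) atTop (𝓝 0)) :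
    IntegrableOn (fun z => z * γ' z) (Ioi 0) := by
  set P : ℝ → ℝ := fun z => ∫ t in (0 : ℝ)..z, γ t
  have hγ_ii : ∀ z, 0 ≤ z → IntervalIntegrable γ volume 0 z := fun z hz =>
    (intervalIntegrable_iff_integrableOn_Ioc_of_le hz).2 (hint.mono_set Ioc_subset_Ioi_self)
  have hP0 : ContinuousWithinAt P (Ici 0) 0 := by
    have h01 : ContinuousWithinAt P (Icc 0 1) 0 :=
      intervalIntegral.continuousWithinAt_primitive (by simp) (by simpa using hγ_ii 1 zero_le_one)
    exact h01.mono_of_mem_nhdsWithin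
      (by simpa [← Ici_inter_Iic] using inter_mem_nhdsWithin (Ici 0) (Iic_mem_nhds one_pos))
  have hP : ∀ z ∈ Ioi (0 : ℝ), HasDerivAt P (γ z) z := fun z hz =>
    intervalIntegral.integral_hasDerivAt_right (hγ_ii z (le_of_lt hz))
      ⟨Ioi 0, Ioi_mem_nhds hz, hint.aestronglyMeasurable⟩
      (hγ' z hz).continuousAt
  -- `z γ'(z)` is the derivative of `z γ(z) - ∫₀ᶻ γ`, which has a limit at infinity
  refine integrableOn_Ioi_deriv_of_nonpos (g := fun z => z * γ z - P z)
    ((continuousWithinAt_id.mul hγ0).sub hP0) (fun z hz => ?_)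
    (fun z hz => mul_nonpos_of_nonneg_of_nonpos (le_of_lt hz) (hγ'_nonpos z hz))
    (hzγ.sub (intervalIntegral_tendsto_integral_Ioi 0 hint tendsto_id))
  have h := ((hasDerivAt_id' z).mul (hγ' z hz)).sub (hP z hz)
  rwa [one_mul, add_sub_cancel_left] at h

theorem abs_sub_comp_add_le (hF : ∀ x, HasDerivAt F (g x) x) (hgM : ∀ y, |g y| ≤ M) (x z : ℝ) :
    |F (x + z) - F x| ≤ M * |z| := by
  simpa using convex_univ.norm_image_sub_le_of_norm_hasDerivWithin_le
    (fun y _ => (hF y).hasDerivWithinAt) (fun y _ => hgM y) (mem_univ x) (mem_univ (x + z))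

theorem integrableOn_Ioi_mul_sub_comp_add {k : ℝ → ℝ} (hk : IntegrableOn k (Ioi 0))
    (hzk : IntegrableOn (fun z => z * k z) (Ioi 0)) (hF : ∀ x, HasDerivAt F (g x) x)
    (hgM : ∀ y, |g y| ≤ M) (x : ℝ) :
    IntegrableOn (fun z => k z * (F x - F (x + z))) (Ioi 0) := by
  have hFc : Continuous F := continuous_iff_continuousAt.2 fun y => (hF y).continuousAt
  refine (hzk.norm.const_mul M).mono'
    (hk.aestronglyMeasurable.mul
      (by fun_prop : Continuous fun z => F x - F (x + z)).aestronglyMeasurable)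
    ((ae_restrict_mem measurableSet_Ioi).mono fun z (hz : 0 < z) => ?_)
  simp only [norm_mul, Real.norm_eq_abs, abs_sub_comm (F x), abs_of_pos hz]
  calc |k z| * |F (x + z) - F x| ≤ |k z| * (M * |z|) := by
        gcongr; exact abs_sub_comp_add_le hF hgM x z
    _ = M * (z * |k z|) := by rw [abs_of_pos hz]; ring

theorem measurable_of_hasDerivAt (hF : ∀ x, HasDerivAt F (g x) x) : Measurable g := by
  simpa only [funext fun x => (hF x).deriv] using measurable_deriv F

-- integration by parts against `z ↦ F (x + z) - F x`, the primitive of `g (x + ·)` vanishing at 0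
theorem setIntegral_Ioi_mul_comp_add_eq (hγ0 : ContinuousWithinAt γ (Ici 0) 0)
    (hγ' : ∀ z ∈ Ioi 0, HasDerivAt γ (γ' z) z) (hint : IntegrableOn γ (Ioi 0))
    (hγ'_int : IntegrableOn γ' (Ioi 0)) (hzγ : Tendsto (fun z => z * γ z) atTop (𝓝 0))
    (hzγ' : IntegrableOn (fun z => z * γ' z) (Ioi 0)) (hF : ∀ x, HasDerivAt F (g x) x)
    (hgM : ∀ y, |g y| ≤ M) (x : ℝ) :
    ∫ z in Ioi 0, γ z * g (x + z) = ∫ z in Ioi 0, γ' z * (F x - F (x + z)) := by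
  have hv : ∀ z ∈ Ioi (0 : ℝ), HasDerivAt (fun z => F (x + z) - F x) (g (x + z)) z :=
    fun z _ => by simpa using ((hF (x + z)).comp z ((hasDerivAt_id z).const_add x)).sub_const (F x)
  have hγg : IntegrableOn (γ * fun z => g (x + z)) (Ioi 0) :=
    (hint.norm.const_mul M).mono'
      (hint.aestronglyMeasurable.mul
        ((measurable_of_hasDerivAt hF).comp (measurable_const_add x)).aestronglyMeasurable)
      (Eventually.of_forall fun z => by
        simpa [abs_mul, mul_comm] using mul_le_mul_of_nonneg_left (hgM (x + z)) (abs_nonneg (γ z)))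
  have hγ'v : IntegrableOn (γ' * fun z => F (x + z) - F x) (Ioi 0) := by
    refine (integrableOn_Ioi_mul_sub_comp_add hγ'_int hzγ' hF hgM x).neg.congr_fun
      (fun z _ => ?_) measurableSet_Ioi
    simp only [Pi.mul_apply, Pi.neg_apply]; ring
  have h_zero : Tendsto (γ * fun z => F (x + z) - F x) (𝓝[>] 0) (𝓝 0) := by
    have hγ : Tendsto γ (𝓝[>] 0) (𝓝 (γ 0)) :=
      hγ0.tendsto.mono_left (nhdsWithin_mono _ Ioi_subset_Ici_self)
    have hv0 : Tendsto (fun z => F (x + z) - F x) (𝓝[>] 0) (𝓝 (F (x + 0) - F x)) :=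
      ((((hF (x + 0)).continuousAt.comp (continuous_const_add x).continuousAt)).sub
        continuousAt_const).mono_left nhdsWithin_le_nhds
    simpa [Pi.mul_def] using hγ.mul hv0
  have h_infty : Tendsto (γ * fun z => F (x + z) - F x) atTop (𝓝 0) := by
    have hbound : Tendsto (fun z => M * |z * γ z|) atTop (𝓝 0) := by
      simpa using hzγ.abs.const_mul M
    refine squeeze_zero_norm (fun z => ?_) hbound
    calc ‖γ z * (F (x + z) - F x)‖ ≤ |γ z| * (M * |z|) := by
          rw [norm_mul, Real.norm_eq_abs, Real.norm_eq_abs]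
          exact mul_le_mul_of_nonneg_left (abs_sub_comp_add_le hF hgM x z) (abs_nonneg _)
      _ = M * |z * γ z| := by rw [abs_mul]; ring
  rw [integral_Ioi_mul_deriv_eq_deriv_mul hγ' hv hγg hγ'v h_zero h_infty, sub_zero, zero_sub,
    ← integral_neg]
  congr 1 with z
  ring

theorem hasDerivAt_setIntegral_Ioi_mul_sub_comp_add {k : ℝ → ℝ} (hk : IntegrableOn k (Ioi 0))
    (hzk : IntegrableOn (fun z => z * k z) (Ioi 0)) (hF : ∀ x, HasDerivAt F (g x) x)
    (hgM : ∀ y, |g y| ≤ M) (x₀ : ℝ) :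
    HasDerivAt (fun x => ∫ z in Ioi 0, k z * (F x - F (x + z)))
      (∫ z in Ioi 0, k z * (g x₀ - g (x₀ + z))) x₀ := by
  have hg := measurable_of_hasDerivAt hF
  refine (hasDerivAt_integral_of_dominated_loc_of_deriv_le
    (F := fun x z => k z * (F x - F (x + z))) (F' := fun x z => k z * (g x - g (x + z)))
    (bound := fun z => |k z| * (2 * M)) univ_mem
    (Eventually.of_forall fun x => (integrableOn_Ioi_mul_sub_comp_add hk hzk hF hgM x).1)
    (integrableOn_Ioi_mul_sub_comp_add hk hzk hF hgM x₀)
    (hk.1.mul (measurable_const.sub (hg.comp (measurable_const_add x₀))).aestronglyMeasurable)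
    (Eventually.of_forall fun z x _ => ?_) (hk.norm.mul_const _)
    (Eventually.of_forall fun z x _ => ?_)).2
  · rw [norm_mul, Real.norm_eq_abs, Real.norm_eq_abs]
    gcongr
    linarith [abs_sub (g x) (g (x + z)), hgM x, hgM (x + z)]
  · exact ((hF x).sub ((hF (x + z)).comp x ((hasDerivAt_id x).add_const z))).const_mul (k z)
      |>.congr_deriv (by simp)

end

/-- **Sign of the spatial derivative of the nonlocal term at a global minimum.**
For a continuously differentiable, nonincreasing, integrable kernel `γ : [0,∞) → [0,∞)`
vanishing at infinity, and a bounded continuous `g`, the function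
`W(x) = ∫_x^∞ γ(y−x) g(y) dy` is differentiable at any global minimum point `x₀` of `g`,
with `W'(x₀) ≥ 0`. -/
theorem nonlocal_term_deriv_nonneg_at_min
    (γ g : ℝ → ℝ) (x₀ : ℝ)
    (hγ_smooth : ContDiffOn ℝ 1 γ (Set.Ici 0))
    (hγ_nonneg : ∀ z ∈ Set.Ici (0 : ℝ), 0 ≤ γ z)
    (hγ_mono : AntitoneOn γ (Set.Ici 0))
    (hγ_int : MeasureTheory.IntegrableOn γ (Set.Ici 0))
    (hγ_lim : Filter.Tendsto γ Filter.atTop (nhds 0))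
    (hg_cont : Continuous g)
    (hg_bdd : ∃ M : ℝ, ∀ y, |g y| ≤ M)
    (hmin : ∀ y : ℝ, g x₀ ≤ g y) :
    DifferentiableAt ℝ (fun x => ∫ y in Set.Ioi x, γ (y - x) * g y) x₀ ∧
      0 ≤ deriv (fun x => ∫ y in Set.Ioi x, γ (y - x) * g y) x₀ := by
  obtain ⟨M, hM⟩ := hg_bdd
  have hγ' : ∀ z ∈ Ioi (0 : ℝ), HasDerivAt γ (deriv γ z) z := fun z hz =>
    ((hγ_smooth.contDiffAt (Ici_mem_nhds hz)).differentiableAt one_ne_zero).hasDerivAt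
  have hγ0 : ContinuousWithinAt γ (Ici 0) 0 := hγ_smooth.continuousOn 0 self_mem_Ici
  have hγ'_nonpos : ∀ z ∈ Ioi (0 : ℝ), deriv γ z ≤ 0 := fun z hz => by
    simpa [derivWithin_of_isOpen isOpen_Ioi hz] using
      (hγ_mono.mono Ioi_subset_Ici_self).derivWithin_nonpos (x := z)
  have hint : IntegrableOn γ (Ioi 0) := hγ_int.mono_set Ioi_subset_Ici_self
  have hzγ := hγ_mono.tendsto_id_mul_atTop_nhds_zero hγ_nonneg hint
  have hγ'_int := integrableOn_Ioi_deriv_of_nonpos hγ0 hγ' hγ'_nonpos hγ_lim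
  have hzγ' := integrableOn_Ioi_id_mul_deriv hγ0 hγ' hγ'_nonpos hint hzγ
  set F : ℝ → ℝ := fun x => ∫ t in (0 : ℝ)..x, g t
  have hF : ∀ x, HasDerivAt F (g x) x := fun x =>
    (hg_cont.integral_hasStrictDerivAt 0 x).hasDerivAt
  have hW : (fun x => ∫ y in Ioi x, γ (y - x) * g y) =
      fun x => ∫ z in Ioi 0, deriv γ z * (F x - F (x + z)) := by
    funext x
    rw [← setIntegral_Ioi_mul_comp_add_eq hγ0 hγ' hint hγ'_int hzγ hzγ' hF hM]
    simpa using (setIntegral_Ioi_comp_add_left (fun y => γ (y - x) * g y) 0 x).symm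
  have hW' := hasDerivAt_setIntegral_Ioi_mul_sub_comp_add hγ'_int hzγ' hF hM x₀
  rw [hW, hW'.deriv]
  exact ⟨hW'.differentiableAt, setIntegral_nonneg measurableSet_Ioi fun z hz =>
    mul_nonneg_of_nonpos_of_nonpos (hγ'_nonpos z hz) (sub_nonpos.2 (hmin _))⟩
end

section
/- Let q ∈ C¹([0,T]×ℝ) be nonnegative with q(t,·) compactly supported for every t, let γ : [0,∞) → [0,∞) be continuously differentiable, nonincreasing, integrable with lim_{z→∞} γ(z) = 0, let V₁, V₂ ∈ C¹(ℝ) satisfy either (V₁' ≤ 0 and V₂' ≥ 0) or (V₁' ≥ 0 and V₂' ≤ 0), and suppose q solves pointwise the equation ∂_t q(t,x) + ∂_x( V₁(W(t,x)) q(t,x) ) = 0, where W(t,x) := ∫_x^∞ γ(y−x) V₂(q(t,y)) dy. Then at every point (t, x̃) where q(t,·) attains its global maximum over ℝ, one has ∂_t q(t, x̃) ≤ 0. -/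
/-!
At a maximum `x₀` of `q(t,·)` the flux derivative reduces to `V₁'(W) ∂ₓW q`, so it suffices that
`V₁'(W(x₀)) ∂ₓW(x₀) ≥ 0`. With `h = V₂ ∘ q(t,·)` one has `W(x) = ∫₀^∞ γ(z) h(z+x) dz`, and
differentiating under the integral gives `∂ₓW(x₀) = ∫₀^∞ γ(z) h'(z+x₀) dz`. If `V₂` is
nondecreasing then `h(z+x₀) ≤ h(x₀)`; integrating by parts on `[0,b]` against
`h(·+x₀) - h(x₀) ≤ 0`, with `γ ≥ 0` and `γ' ≤ 0`, makes every truncated integral nonpositive, so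
`∂ₓW(x₀) ≤ 0`, which matches `V₁' ≤ 0`. The other sign case is the same argument for `-h`.
-/

open MeasureTheory Set Filter

/-- The nonlocal term `W(t,x) = ∫_x^∞ γ(y−x) V₂(q(t,y)) dy` for `q : ℝ × ℝ → ℝ`. -/
noncomputable def nonlocalW (γ V₂ : ℝ → ℝ) (q : ℝ × ℝ → ℝ) (t x : ℝ) : ℝ :=
  ∫ y in Set.Ioi x, γ (y - x) * V₂ (q (t, y))

lemma intervalIntegral_mul_deriv_nonpos_of_antitoneOn {γ ψ : ℝ → ℝ} {b : ℝ} (hb : 0 ≤ b)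
    (hγ : ContDiffOn ℝ 1 γ (Ici 0)) (hγ_nonneg : ∀ z ∈ Ici (0 : ℝ), 0 ≤ γ z)
    (hγ_anti : AntitoneOn γ (Ici 0)) (hψ : ContDiff ℝ 1 ψ)
    (hψ_le : ∀ z ∈ Ici (0 : ℝ), ψ z ≤ ψ 0) :
    ∫ z in (0 : ℝ)..b, γ z * deriv ψ z ≤ 0 := by
  have hsub : uIcc 0 b ⊆ Ici (0 : ℝ) := by
    rw [uIcc_of_le hb]
    exact Icc_subset_Ici_self
  have hγ' : ∀ z ∈ Ioo (min 0 b) (max 0 b), HasDerivAt γ (derivWithin γ (Ici 0) z) z := by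
    intro z hz
    rw [min_eq_left hb] at hz
    have hmem : Ici (0 : ℝ) ∈ nhds z := Ici_mem_nhds hz.1
    rw [derivWithin_of_mem_nhds hmem]
    exact ((hγ.differentiableOn one_ne_zero z hz.1.le).differentiableAt hmem).hasDerivAt
  have ibp := intervalIntegral.integral_mul_deriv_eq_deriv_mul_of_hasDerivAt
    (v := fun z => ψ z - ψ 0) (hγ.continuousOn.mono hsub)
    (hψ.continuous.sub continuous_const).continuousOn hγ'
    (fun z _ => ((hψ.differentiable one_ne_zero z).hasDerivAt).sub_const (ψ 0))
    ((hγ.continuousOn_derivWithin (uniqueDiffOn_Ici 0) le_rfl).mono hsub).intervalIntegrable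
    ((hψ.continuous_deriv le_rfl).intervalIntegrable _ _)
  have hboundary : γ b * (ψ b - ψ 0) ≤ 0 :=
    mul_nonpos_of_nonneg_of_nonpos (hγ_nonneg b hb) (sub_nonpos.2 (hψ_le b hb))
  have hbulk : 0 ≤ ∫ z in (0 : ℝ)..b, derivWithin γ (Ici 0) z * (ψ z - ψ 0) :=
    intervalIntegral.integral_nonneg hb fun z hz =>
      mul_nonneg_of_nonpos_of_nonpos hγ_anti.derivWithin_nonpos (sub_nonpos.2 (hψ_le z hz.1))
  rw [ibp, sub_self, mul_zero, sub_zero]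
  linarith

lemma setIntegral_Ioi_mul_deriv_comp_add_nonpos {γ h : ℝ → ℝ} {x₀ C : ℝ}
    (hγ : ContDiffOn ℝ 1 γ (Ici 0)) (hγ_nonneg : ∀ z ∈ Ici (0 : ℝ), 0 ≤ γ z)
    (hγ_anti : AntitoneOn γ (Ici 0)) (hγ_int : IntegrableOn γ (Ioi 0))
    (hh : ContDiff ℝ 1 h) (hC : ∀ y, ‖deriv h y‖ ≤ C)
    (hmax : ∀ z ∈ Ici (0 : ℝ), h (z + x₀) ≤ h x₀) :
    ∫ z in Ioi (0 : ℝ), γ z * deriv h (z + x₀) ≤ 0 := by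
  have hint : IntegrableOn (fun z => γ z * deriv h (z + x₀)) (Ioi 0) :=
    hγ_int.mul_bdd
      ((hh.continuous_deriv le_rfl).comp (continuous_add_const x₀)).aestronglyMeasurable
      (ae_of_all _ fun z => hC _)
  refine le_of_tendsto (intervalIntegral_tendsto_integral_Ioi 0 hint tendsto_id) ?_
  filter_upwards [eventually_ge_atTop 0] with b hb
  simpa only [id, deriv_comp_add_const] using
    intervalIntegral_mul_deriv_nonpos_of_antitoneOn (ψ := fun z => h (z + x₀)) hb hγ hγ_nonneg
      hγ_anti (hh.comp (contDiff_id.add contDiff_const)) (by simpa using hmax)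

lemma deriv_mul_setIntegral_mul_deriv_comp_add_nonneg {γ V₁ V₂ g : ℝ → ℝ} {x₀ C : ℝ}
    (hγ : ContDiffOn ℝ 1 γ (Ici 0)) (hγ_nonneg : ∀ z ∈ Ici (0 : ℝ), 0 ≤ γ z)
    (hγ_anti : AntitoneOn γ (Ici 0)) (hγ_int : IntegrableOn γ (Ioi 0))
    (hsign : ((∀ x, deriv V₁ x ≤ 0) ∧ (∀ x, 0 ≤ deriv V₂ x)) ∨
             ((∀ x, 0 ≤ deriv V₁ x) ∧ (∀ x, deriv V₂ x ≤ 0)))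
    (hV₂ : Differentiable ℝ V₂) (hh : ContDiff ℝ 1 fun y => V₂ (g y))
    (hC : ∀ y, ‖deriv (fun y => V₂ (g y)) y‖ ≤ C) (hmax : ∀ y, g y ≤ g x₀) (w : ℝ) :
    0 ≤ deriv V₁ w * ∫ z in Ioi (0 : ℝ), γ z * deriv (fun y => V₂ (g y)) (z + x₀) := by
  rcases hsign with ⟨hV₁', hV₂'⟩ | ⟨hV₁', hV₂'⟩
  · refine mul_nonneg_of_nonpos_of_nonpos (hV₁' w) ?_
    exact setIntegral_Ioi_mul_deriv_comp_add_nonpos hγ hγ_nonneg hγ_anti hγ_int hh hC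
      fun z _ => monotone_of_deriv_nonneg hV₂ hV₂' (hmax _)
  · refine mul_nonneg (hV₁' w) ?_
    have := setIntegral_Ioi_mul_deriv_comp_add_nonpos hγ hγ_nonneg hγ_anti hγ_int hh.neg
      (by simpa only [deriv.fun_neg', norm_neg] using hC)
      fun z _ => neg_le_neg <| antitone_of_deriv_nonpos hV₂ hV₂' (hmax (z + x₀))
    simpa only [deriv.fun_neg', mul_neg, integral_neg, neg_nonpos] using this

lemma hasDerivAt_integral_mul_comp_add {μ : Measure ℝ} {γ h : ℝ → ℝ} {C₀ C₁ : ℝ}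
    (hγ : Integrable γ μ) (hh : ContDiff ℝ 1 h) (hC₀ : ∀ y, ‖h y‖ ≤ C₀)
    (hC₁ : ∀ y, ‖deriv h y‖ ≤ C₁) (x₀ : ℝ) :
    HasDerivAt (fun x => ∫ z, γ z * h (z + x) ∂μ) (∫ z, γ z * deriv h (z + x₀) ∂μ) x₀ := by
  have hmeas : ∀ {f : ℝ → ℝ}, Continuous f → ∀ x, AEStronglyMeasurable (fun z => f (z + x)) μ :=
    fun hf x => (hf.comp (continuous_add_const x)).aestronglyMeasurable
  refine (hasDerivAt_integral_of_dominated_loc_of_deriv_le (F := fun x z => γ z * h (z + x))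
    (F' := fun x z => γ z * deriv h (z + x)) (bound := fun z => ‖γ z‖ * C₁)
    univ_mem (Eventually.of_forall fun x => hγ.aestronglyMeasurable.mul (hmeas hh.continuous x))
    (hγ.mul_bdd (hmeas hh.continuous x₀) (ae_of_all _ fun z => hC₀ _))
    (hγ.aestronglyMeasurable.mul (hmeas (hh.continuous_deriv le_rfl) x₀))
    (ae_of_all _ fun z x _ => ?_) (hγ.norm.mul_const C₁) (ae_of_all _ fun z x _ => ?_)).2
  · rw [norm_mul]
    exact mul_le_mul_of_nonneg_left (hC₁ _) (norm_nonneg _)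
  · exact ((hh.differentiable one_ne_zero _).hasDerivAt.comp_const_add z x).const_mul (γ z)

lemma nonlocalW_eq_setIntegral_Ioi_zero (γ V₂ : ℝ → ℝ) (q : ℝ × ℝ → ℝ) (t x : ℝ) :
    nonlocalW γ V₂ q t x = ∫ z in Ioi (0 : ℝ), γ z * V₂ (q (t, z + x)) := by
  have hpre : (fun z : ℝ => z + x) ⁻¹' Ioi x = Ioi 0 := by
    ext z
    simp
  rw [nonlocalW, ← (measurePreserving_add_right volume x).setIntegral_preimage_emb
    (Homeomorph.addRight x).measurableEmbedding, hpre]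
  simp only [add_sub_cancel_right]

lemma ContDiff.exists_bounds_of_hasCompactSupport_sub {f : ℝ → ℝ} {c : ℝ}
    (hf : ContDiff ℝ 1 f) (hfc : HasCompactSupport fun x => f x - c) :
    (∃ C, ∀ x, ‖f x‖ ≤ C) ∧ ∃ C, ∀ x, ‖deriv f x‖ ≤ C := by
  obtain ⟨C₀, hC₀⟩ := hfc.exists_bound_of_continuous (hf.continuous.sub continuous_const)
  have hC₁ := hfc.deriv.exists_bound_of_continuous
    (by rw [deriv_sub_const_fun]; exact hf.continuous_deriv le_rfl)
  rw [deriv_sub_const_fun] at hC₁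
  exact ⟨⟨‖c‖ + C₀, fun x => (norm_le_norm_add_norm_sub' (f x) c).trans
    (add_le_add le_rfl (hC₀ x))⟩, hC₁⟩

theorem time_deriv_nonpos_at_max_general
    (T : ℝ) (q : ℝ × ℝ → ℝ) (γ V₁ V₂ : ℝ → ℝ)
    (hq_smooth : ContDiffOn ℝ 1 q (Set.Icc 0 T ×ˢ (Set.univ : Set ℝ)))
    (hq_nonneg : ∀ t x : ℝ, 0 ≤ q (t, x))
    (hq_supp : ∀ t : ℝ, HasCompactSupport fun x => q (t, x))
    (hγ_smooth : ContDiffOn ℝ 1 γ (Set.Ici 0))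
    (hγ_nonneg : ∀ z ∈ Set.Ici (0 : ℝ), 0 ≤ γ z)
    (hγ_mono : AntitoneOn γ (Set.Ici 0))
    (hγ_int : MeasureTheory.IntegrableOn γ (Set.Ici 0))
    (hV₁ : ContDiff ℝ 1 V₁) (hV₂ : ContDiff ℝ 1 V₂)
    (hsign : ((∀ x, deriv V₁ x ≤ 0) ∧ (∀ x, 0 ≤ deriv V₂ x)) ∨
             ((∀ x, 0 ≤ deriv V₁ x) ∧ (∀ x, deriv V₂ x ≤ 0)))
    (hPDE : ∀ t ∈ Set.Icc (0 : ℝ) T, ∀ x : ℝ,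
      deriv (fun s => q (s, x)) t
        + deriv (fun y => V₁ (nonlocalW γ V₂ q t y) * q (t, y)) x = 0) :
    ∀ t ∈ Set.Icc (0 : ℝ) T, ∀ x₀ : ℝ,
      (∀ y : ℝ, q (t, y) ≤ q (t, x₀)) →
      deriv (fun s => q (s, x₀)) t ≤ 0 := by
  intro t ht x₀ hmax
  set g : ℝ → ℝ := fun y => q (t, y)
  set h : ℝ → ℝ := fun y => V₂ (g y)
  have hg : ContDiff ℝ 1 g := contDiffOn_univ.1 <|
    hq_smooth.comp (contDiff_const.prodMk contDiff_id).contDiffOn fun y _ => ⟨ht, mem_univ y⟩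
  have hh : ContDiff ℝ 1 h := hV₂.comp hg
  obtain ⟨⟨C₀, hC₀⟩, ⟨C₁, hC₁⟩⟩ := hh.exists_bounds_of_hasCompactSupport_sub
    ((hq_supp t).comp_left (g := fun u => V₂ u - V₂ 0) (sub_self _))
  have hγ_int' : IntegrableOn γ (Ioi 0) := hγ_int.mono_set Ioi_subset_Ici_self
  set D := ∫ z in Ioi (0 : ℝ), γ z * deriv h (z + x₀)
  have hW : HasDerivAt (nonlocalW γ V₂ q t) D x₀ := by
    rw [funext (nonlocalW_eq_setIntegral_Ioi_zero γ V₂ q t)]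
    exact hasDerivAt_integral_mul_comp_add hγ_int' hh hC₀ hC₁ x₀
  have hg' : HasDerivAt g 0 x₀ := by
    have hloc : IsLocalMax g x₀ := Eventually.of_forall hmax
    rw [← hloc.deriv_eq_zero]
    exact (hg.differentiable one_ne_zero x₀).hasDerivAt
  have hflux : HasDerivAt (fun y => V₁ (nonlocalW γ V₂ q t y) * q (t, y))
      (deriv V₁ (nonlocalW γ V₂ q t x₀) * D * g x₀) x₀ := by
    have := ((hV₁.differentiable one_ne_zero _).hasDerivAt.comp x₀ hW).mul hg'
    rwa [mul_zero, add_zero] at this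
  have hD : 0 ≤ deriv V₁ (nonlocalW γ V₂ q t x₀) * D :=
    deriv_mul_setIntegral_mul_deriv_comp_add_nonneg hγ_smooth hγ_nonneg hγ_mono hγ_int' hsign
      (hV₂.differentiable one_ne_zero) hh hC₁ hmax _
  have hPDE₀ := hPDE t ht x₀
  rw [hflux.deriv] at hPDE₀
  linarith [mul_nonneg hD (hq_nonneg t x₀)]

/-- **Time derivative is nonpositive at a spatial global maximum.**
For a nonnegative classical solution `q ∈ C¹([0,T]×ℝ)` with compactly supported time
slices of `∂ₜ q + ∂ₓ(V₁(W) q) = 0`, where `W(t,x) = ∫_x^∞ γ(y−x) V₂(q(t,y)) dy`, with a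
`C¹`, nonincreasing, integrable kernel `γ ≥ 0` vanishing at infinity, and `V₁, V₂ ∈ C¹`
satisfying either (`V₁' ≤ 0` and `V₂' ≥ 0`) or (`V₁' ≥ 0` and `V₂' ≤ 0`), one has
`∂ₜ q(t, x₀) ≤ 0` at every point where `q(t,·)` attains its global maximum. -/
theorem time_deriv_nonpos_at_max
    (T : ℝ) (hT : 0 < T) (q : ℝ × ℝ → ℝ) (γ V₁ V₂ : ℝ → ℝ)
    (hq_smooth : ContDiffOn ℝ 1 q (Set.Icc 0 T ×ˢ (Set.univ : Set ℝ)))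
    (hq_nonneg : ∀ t x : ℝ, 0 ≤ q (t, x))
    (hq_supp : ∀ t : ℝ, HasCompactSupport fun x => q (t, x))
    (hγ_smooth : ContDiffOn ℝ 1 γ (Set.Ici 0))
    (hγ_nonneg : ∀ z ∈ Set.Ici (0 : ℝ), 0 ≤ γ z)
    (hγ_mono : AntitoneOn γ (Set.Ici 0))
    (hγ_int : MeasureTheory.IntegrableOn γ (Set.Ici 0))
    (hγ_lim : Filter.Tendsto γ Filter.atTop (nhds 0))
    (hV₁ : ContDiff ℝ 1 V₁) (hV₂ : ContDiff ℝ 1 V₂)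
    (hsign : ((∀ x, deriv V₁ x ≤ 0) ∧ (∀ x, 0 ≤ deriv V₂ x)) ∨
             ((∀ x, 0 ≤ deriv V₁ x) ∧ (∀ x, deriv V₂ x ≤ 0)))
    (hPDE : ∀ t ∈ Set.Icc (0 : ℝ) T, ∀ x : ℝ,
      deriv (fun s => q (s, x)) t
        + deriv (fun y => V₁ (nonlocalW γ V₂ q t y) * q (t, y)) x = 0) :
    ∀ t ∈ Set.Icc (0 : ℝ) T, ∀ x₀ : ℝ,
      (∀ y : ℝ, q (t, y) ≤ q (t, x₀)) →
      deriv (fun s => q (s, x₀)) t ≤ 0 :=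
  time_deriv_nonpos_at_max_general T q γ V₁ V₂ hq_smooth hq_nonneg hq_supp hγ_smooth hγ_nonneg
    hγ_mono hγ_int hV₁ hV₂ hsign hPDE
end

section
/- Let η > 0, let V₁ ∈ C²(ℝ) and V₂ ∈ C¹(ℝ) satisfy either (V₁' ≤ 0 and V₂' ≥ 0) or (V₁' ≥ 0 and V₂' ≤ 0), and additionally V₁'' ≤ 0. Let q be a nonnegative, twice continuously differentiable solution of ∂_t q(t,x) + ∂_x( V₁(W(t,x)) q(t,x) ) = 0 with W(t,x) := (1/η) ∫_x^{x+η} V₂(q(t,y)) dy. Fix a time t and a point x̃ such that ∂_x q(t,x) ≥ 0 for all x ∈ ℝ, ∂_x q(t,x̃) = 0, and ∂_x² q(t,x̃) = 0. Then ∂_t ∂_x q(t,x̃) ≥ 0; i.e. the dynamics preserve monotonically increasing profiles. -/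
/-!
Exchanging the mixed partials and using the equation gives `∂ₜ∂ₓq = -∂ₓ²(V₁(W) q)`. Where
`∂ₓq = ∂ₓ²q = 0`, only two terms of the second derivative of the flux survive:
`V₁''(W) (∂ₓW)² q`, nonpositive by concavity of `V₁`, and `V₁'(W) (∂ₓ²W) q`. Since the
moving-average kernel only sees the two endpoints of the window,
`∂ₓ²W(x₀) = V₂'(q(x₀ + η)) ∂ₓq(x₀ + η) / η`, and the opposite monotonicity of `V₁`, `V₂`
together with `∂ₓq ≥ 0` makes this term nonpositive as well.
-/

open MeasureTheory Set

/-- The moving-average nonlocal term `W(t,x) = (1/η) ∫_x^{x+η} V₂(q(t,y)) dy`. -/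
noncomputable def movingAvgW (η : ℝ) (V₂ : ℝ → ℝ) (q : ℝ × ℝ → ℝ) (t x : ℝ) : ℝ :=
  (1 / η) * ∫ y in x..(x + η), V₂ (q (t, y))

section VectorValued

variable {F : Type*} [NormedAddCommGroup F] [NormedSpace ℝ F]

theorem differentiable_deriv_of_contDiff_two {f : ℝ → F} (hf : ContDiff ℝ 2 f) :
    Differentiable ℝ (deriv f) :=
  (hf.deriv' (n := 1)).differentiable one_ne_zero

theorem HasFDerivAt.hasDerivAt_fst_slice {g : ℝ × ℝ → F} {g' : ℝ × ℝ →L[ℝ] F} {s x : ℝ}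
    (h : HasFDerivAt g g' (s, x)) : HasDerivAt (fun s => g (s, x)) (g' (1, 0)) s :=
  h.comp_hasDerivAt s ((hasDerivAt_id s).prodMk (hasDerivAt_const s x))

theorem HasFDerivAt.hasDerivAt_snd_slice {g : ℝ × ℝ → F} {g' : ℝ × ℝ →L[ℝ] F} {s x : ℝ}
    (h : HasFDerivAt g g' (s, x)) : HasDerivAt (fun y => g (s, y)) (g' (0, 1)) x :=
  h.comp_hasDerivAt x ((hasDerivAt_const x s).prodMk (hasDerivAt_id x))

end VectorValued

theorem deriv_deriv_prod_comm {f : ℝ × ℝ → ℝ} (hf : ContDiff ℝ 2 f) (t x : ℝ) :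
    deriv (fun s => deriv (fun y => f (s, y)) x) t
      = deriv (fun y => deriv (fun s => f (s, y)) t) x := by
  have hf' : ∀ p, HasFDerivAt f (fderiv ℝ f p) p :=
    fun p => (hf.differentiable two_ne_zero p).hasFDerivAt
  have hf'' : HasFDerivAt (fderiv ℝ f) (fderiv ℝ (fderiv ℝ f) (t, x)) (t, x) :=
    ((hf.fderiv_right le_rfl).differentiable one_ne_zero (t, x)).hasFDerivAt
  have hfst : deriv (fun s => deriv (fun y => f (s, y)) x) t
      = fderiv ℝ (fderiv ℝ f) (t, x) (1, 0) (0, 1) := by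
    simp_rw [fun s => (hf' (s, x)).hasDerivAt_snd_slice.deriv]
    exact (hf''.hasDerivAt_fst_slice.clm_apply (hasDerivAt_const t _)).deriv.trans (by simp)
  have hsnd : deriv (fun y => deriv (fun s => f (s, y)) t) x
      = fderiv ℝ (fderiv ℝ f) (t, x) (0, 1) (1, 0) := by
    simp_rw [fun y => (hf' (t, y)).hasDerivAt_fst_slice.deriv]
    exact (hf''.hasDerivAt_snd_slice.clm_apply (hasDerivAt_const x _)).deriv.trans (by simp)
  rw [hfst, hsnd, (hf.contDiffAt.isSymmSndFDerivAt (by simp)) (1, 0) (0, 1)]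

theorem hasDerivAt_integral_window {E : Type*} [NormedAddCommGroup E] [NormedSpace ℝ E]
    [CompleteSpace E] {h : ℝ → E} (hh : Continuous h) (η y : ℝ) :
    HasDerivAt (fun x => ∫ z in x..x + η, h z) (h (y + η) - h y) y := by
  have hH : ∀ b, HasDerivAt (fun x => ∫ z in (0 : ℝ)..x, h z) (h b) b :=
    fun b => (hh.integral_hasStrictDerivAt 0 b).hasDerivAt
  have hwindow : (fun x => ∫ z in x..x + η, h z)
      = fun x => (∫ z in (0 : ℝ)..x + η, h z) - ∫ z in (0 : ℝ)..x, h z :=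
    funext fun x => (intervalIntegral.integral_interval_sub_left
      (hh.intervalIntegrable _ _) (hh.intervalIntegrable _ _)).symm
  rw [hwindow]
  exact ((hH (y + η)).comp_add_const y η).sub (hH y)

section MovingAverage

variable {η : ℝ} {V₂ : ℝ → ℝ} {q : ℝ × ℝ → ℝ} {t : ℝ}

theorem hasDerivAt_movingAvgW (hV₂ : Continuous V₂) (hq : Continuous fun y => q (t, y))
    (x : ℝ) :
    HasDerivAt (movingAvgW η V₂ q t) ((1 / η) * (V₂ (q (t, x + η)) - V₂ (q (t, x)))) x :=
  (hasDerivAt_integral_window (hV₂.comp hq) η x).const_mul (1 / η)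

theorem deriv_movingAvgW (hV₂ : Continuous V₂) (hq : Continuous fun y => q (t, y)) :
    deriv (movingAvgW η V₂ q t) = fun x => (1 / η) * (V₂ (q (t, x + η)) - V₂ (q (t, x))) :=
  funext fun x => (hasDerivAt_movingAvgW hV₂ hq x).deriv

theorem contDiff_movingAvgW (hV₂ : ContDiff ℝ 1 V₂) (hq : ContDiff ℝ 1 fun y => q (t, y)) :
    ContDiff ℝ 2 (movingAvgW η V₂ q t) := by
  refine (contDiff_succ_iff_deriv (n := 1)).mpr
    ⟨fun x => (hasDerivAt_movingAvgW hV₂.continuous hq.continuous x).differentiableAt,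
      by simp, ?_⟩
  rw [deriv_movingAvgW hV₂.continuous hq.continuous]
  have hshift : ContDiff ℝ 1 fun x => q (t, x + η) := hq.comp (contDiff_id.add contDiff_const)
  exact contDiff_const.mul ((hV₂.comp hshift).sub (hV₂.comp hq))

theorem deriv_deriv_movingAvgW (hV₂ : Differentiable ℝ V₂)
    (hq : Differentiable ℝ fun y => q (t, y)) (x : ℝ) :
    deriv (deriv (movingAvgW η V₂ q t)) x
      = (1 / η) * (deriv V₂ (q (t, x + η)) * deriv (fun y => q (t, y)) (x + η)
          - deriv V₂ (q (t, x)) * deriv (fun y => q (t, y)) x) := by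
  rw [deriv_movingAvgW hV₂.continuous hq.continuous]
  have hV₂q : ∀ y, HasDerivAt (fun y => V₂ (q (t, y)))
      (deriv V₂ (q (t, y)) * deriv (fun y => q (t, y)) y) y :=
    fun y => (hV₂ _).hasDerivAt.comp y (hq y).hasDerivAt
  exact ((((hV₂q (x + η)).comp_add_const x η).sub (hV₂q x)).const_mul (1 / η)).deriv

end MovingAverage

theorem deriv_deriv_comp_mul {V w u : ℝ → ℝ} (hV : ContDiff ℝ 2 V) (hw : ContDiff ℝ 2 w)
    (hu : ContDiff ℝ 2 u) (x : ℝ) :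
    deriv (deriv fun y => V (w y) * u y) x
      = deriv (deriv V) (w x) * deriv w x ^ 2 * u x + deriv V (w x) * deriv (deriv w) x * u x
        + 2 * (deriv V (w x) * deriv w x * deriv u x) + V (w x) * deriv (deriv u) x := by
  have hd : ∀ {f : ℝ → ℝ}, ContDiff ℝ 2 f → ∀ y, HasDerivAt f (deriv f y) y :=
    fun hf y => (hf.differentiable two_ne_zero y).hasDerivAt
  have hdd : ∀ {f : ℝ → ℝ}, ContDiff ℝ 2 f → ∀ y, HasDerivAt (deriv f) (deriv (deriv f) y) y :=
    fun hf y => (differentiable_deriv_of_contDiff_two hf y).hasDerivAt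
  have hflux : deriv (fun y => V (w y) * u y)
      = fun y => deriv V (w y) * deriv w y * u y + V (w y) * deriv u y :=
    funext fun y => (((hd hV (w y)).comp y (hd hw y)).mul (hd hu y)).deriv
  rw [hflux]
  refine ((((hdd hV (w x)).comp x (hd hw x)).mul (hdd hw x)).mul (hd hu x)
    |>.add (((hd hV (w x)).comp x (hd hw x)).mul (hdd hu x))).deriv.trans ?_
  simp only [Pi.mul_apply, Function.comp_apply]
  ring

/-- **Preservation of monotonically increasing profiles.**
Let `V₁ ∈ C²`, `V₂ ∈ C¹` satisfy either (`V₁' ≤ 0` and `V₂' ≥ 0`) or (`V₁' ≥ 0` and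
`V₂' ≤ 0`) together with `V₁'' ≤ 0`, and let `q ≥ 0` be a `C²` solution of
`∂ₜ q + ∂ₓ(V₁(W) q) = 0` with `W(t,x) = (1/η) ∫_x^{x+η} V₂(q(t,y)) dy`. If at time `t` the
profile satisfies `∂ₓ q(t,·) ≥ 0` everywhere and `∂ₓ q(t,x₀) = 0`, `∂ₓ² q(t,x₀) = 0`, then
`∂ₜ ∂ₓ q(t,x₀) ≥ 0`. -/
theorem monotone_increasing_preserved
    (η : ℝ) (hη : 0 < η) (q : ℝ × ℝ → ℝ) (V₁ V₂ : ℝ → ℝ)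
    (hV₁ : ContDiff ℝ 2 V₁) (hV₂ : ContDiff ℝ 1 V₂)
    (hsign : ((∀ x, deriv V₁ x ≤ 0) ∧ (∀ x, 0 ≤ deriv V₂ x)) ∨
             ((∀ x, 0 ≤ deriv V₁ x) ∧ (∀ x, deriv V₂ x ≤ 0)))
    (hV₁'' : ∀ x, deriv (deriv V₁) x ≤ 0)
    (hq_smooth : ContDiff ℝ 2 q)
    (hq_nonneg : ∀ t x : ℝ, 0 ≤ q (t, x))
    (hPDE : ∀ t x : ℝ,
      deriv (fun s => q (s, x)) t
        + deriv (fun y => V₁ (movingAvgW η V₂ q t y) * q (t, y)) x = 0)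
    (t x₀ : ℝ)
    (hinc : ∀ x : ℝ, 0 ≤ deriv (fun y => q (t, y)) x)
    (hcrit : deriv (fun y => q (t, y)) x₀ = 0)
    (hcrit2 : deriv (deriv (fun y => q (t, y))) x₀ = 0) :
    0 ≤ deriv (fun s => deriv (fun y => q (s, y)) x₀) t := by
  set u : ℝ → ℝ := fun y => q (t, y)
  set W := movingAvgW η V₂ q t
  have hu : ContDiff ℝ 2 u := hq_smooth.comp (contDiff_const.prodMk contDiff_id)
  have hdt : (fun y => deriv (fun s => q (s, y)) t)
      = fun y => -deriv (fun y => V₁ (W y) * u y) y :=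
    funext fun y => eq_neg_of_add_eq_zero_left (hPDE t y)
  rw [deriv_deriv_prod_comm hq_smooth, hdt, deriv.fun_neg,
    deriv_deriv_comp_mul hV₁ (contDiff_movingAvgW hV₂ (hu.of_le one_le_two)) hu,
    deriv_deriv_movingAvgW (hV₂.differentiable one_ne_zero) (hu.differentiable two_ne_zero),
    hcrit, hcrit2]
  have hV₁V₂ : deriv V₁ (W x₀) * deriv V₂ (u (x₀ + η)) ≤ 0 := by
    rcases hsign with ⟨hV₁', hV₂'⟩ | ⟨hV₁', hV₂'⟩
    · exact mul_nonpos_of_nonpos_of_nonneg (hV₁' _) (hV₂' _)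
    · exact mul_nonpos_of_nonneg_of_nonpos (hV₁' _) (hV₂' _)
  have hweight : 0 ≤ 1 / η * deriv u (x₀ + η) * u x₀ :=
    mul_nonneg (mul_nonneg (by positivity) (hinc _)) (hq_nonneg t x₀)
  have hconcave : deriv (deriv V₁) (W x₀) * (deriv W x₀ ^ 2 * u x₀) ≤ 0 :=
    mul_nonpos_of_nonpos_of_nonneg (hV₁'' _) (mul_nonneg (sq_nonneg _) (hq_nonneg t x₀))
  linarith [mul_nonpos_of_nonpos_of_nonneg hV₁V₂ hweight]
end
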